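/- arXiv:2308.08694 — 2 statements merged into one kernel-verified Lean document; each statement's English description precedes it below -/
import Mathlib

section
/- Let $\lambda \vdash n$ be a partition with $\lambda_1 = n - d$ where $d \le n$. Then the dimension of the irreducible representation of $S_n$ indexed by $\lambda$ (equivalently, the number of standard Young tableaux of shape $\lambda$) is at most $n^d / \sqrt{d!}$. -/
def IsPartitionList (L : List ℕ) (n : ℕ) : Prop :=
  L.Pairwise (· ≥ ·) ∧ (∀ x ∈ L, 0 < x) ∧ L.sum = n

/-- `T` is a standard Young tableau of shape `L`: it fills the cells of the Young
diagram of `L` bijectively with `1, …, L.sum`, is `0` off the diagram, and is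
strictly increasing along rows and columns. -/
def IsSYT (L : List ℕ) (T : ℕ × ℕ → ℕ) : Prop :=
  (∀ p : ℕ × ℕ, ¬ p.2 < L.getD p.1 0 → T p = 0) ∧
  Set.BijOn T {p : ℕ × ℕ | p.2 < L.getD p.1 0} (Set.Icc 1 L.sum) ∧
  (∀ i j j' : ℕ, j < j' → j' < L.getD i 0 → T (i, j) < T (i, j')) ∧
  (∀ i i' j : ℕ, i < i' → j < L.getD i' 0 → T (i, j) < T (i', j))

/-- The number of standard Young tableaux of shape `L`. -/
noncomputable def sytCount (L : List ℕ) : ℕ :=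
  Nat.card {T : ℕ × ℕ → ℕ // IsSYT L T}

/-!
Write `λ = (n - d, μ)` with `μ ⊢ d`. A standard tableau of shape `λ` is determined by the set of
its `d` entries below the first row together with the standardization of those rows (each entry
replaced by its rank), because the first row must list the remaining entries increasingly.
Hence `f^λ ≤ C(n, d) f^μ ≤ (n^d / d!) f^μ`.

For `f^μ ≤ √(d!)`, bound `f^μ` by the number of saturated chains from `∅` to `μ` in Young's
lattice; the relation `DU - UD = 1` between its up and down operators makes the squares of these
numbers over all `μ ⊢ d` sum to `d!`.
-/

open Finset Nat

theorem finite_subtype_of_eq_zero_off {α : Type*} {C : Finset α} {N : ℕ}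
    {P : (α → ℕ) → Prop} (hzero : ∀ T, P T → ∀ p ∉ C, T p = 0)
    (hle : ∀ T, P T → ∀ p ∈ C, T p ≤ N) : Finite {T // P T} :=
  Finite.of_injective
    (fun (T : {T // P T}) (p : C) => (⟨T.1 p, Nat.lt_succ_of_le (hle _ T.2 p p.2)⟩ : Fin (N + 1)))
    fun T T' h => Subtype.ext <| funext fun p => by
      by_cases hp : p ∈ C
      · exact congrArg Fin.val (congrFun h ⟨p, hp⟩)
      · rw [hzero _ T.2 p hp, hzero _ T'.2 p hp]

namespace YoungDiagram

variable {μ : YoungDiagram} {c c' : ℕ × ℕ}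

theorem rowLen_le_card (μ : YoungDiagram) (i : ℕ) : μ.rowLen i ≤ μ.card := by
  rw [rowLen_eq_card]
  exact card_le_card (filter_subset _ _)

theorem colLen_le_card (μ : YoungDiagram) (j : ℕ) : μ.colLen j ≤ μ.card := by
  rw [colLen_eq_card]
  exact card_le_card (filter_subset _ _)

theorem card_eq_zero_iff : μ.card = 0 ↔ μ = ⊥ := by
  rw [YoungDiagram.card, Finset.card_eq_zero, ← cells_bot, YoungDiagram.ext_iff]

theorem ne_bot_of_mem (h : c ∈ μ) : μ ≠ ⊥ := by
  rintro rfl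
  exact notMem_bot c h

def IsRemovable (μ : YoungDiagram) (c : ℕ × ℕ) : Prop :=
  c ∈ μ ∧ (c.1 + 1, c.2) ∉ μ ∧ (c.1, c.2 + 1) ∉ μ

def IsAddable (μ : YoungDiagram) (c : ℕ × ℕ) : Prop :=
  c ∉ μ ∧ (∀ i < c.1, (i, c.2) ∈ μ) ∧ (∀ j < c.2, (c.1, j) ∈ μ)

theorem isRemovable_iff {i j : ℕ} :
    μ.IsRemovable (i, j) ↔ j + 1 = μ.rowLen i ∧ μ.rowLen (i + 1) ≤ j := by
  simp only [IsRemovable, mem_iff_lt_rowLen, not_lt]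
  omega

theorem isAddable_iff {i j : ℕ} :
    μ.IsAddable (i, j) ↔ j = μ.rowLen i ∧ (i = 0 ∨ μ.rowLen i < μ.rowLen (i - 1)) := by
  simp only [IsAddable, mem_iff_lt_rowLen, not_lt]
  constructor
  · rintro ⟨hj, hcol, hrow⟩
    obtain rfl : j = μ.rowLen i := by
      rcases Nat.eq_zero_or_pos j with rfl | hj0
      · omega
      · have := hrow (j - 1) (by omega)
        omega
    rcases Nat.eq_zero_or_pos i with rfl | hi0
    · exact ⟨rfl, Or.inl rfl⟩
    · exact ⟨rfl, Or.inr (hcol (i - 1) (by omega))⟩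
  · rintro ⟨rfl, hi⟩
    refine ⟨le_rfl, fun i' hi' => ?_, fun j' hj' => hj'⟩
    rcases hi with rfl | hi
    · omega
    · exact hi.trans_le (μ.rowLen_anti i' (i - 1) (by omega))

theorem IsRemovable.isLowerSet_erase (h : μ.IsRemovable c) :
    IsLowerSet (↑(μ.cells.erase c) : Set (ℕ × ℕ)) := by
  intro e d hde hmem
  obtain ⟨hec, he⟩ := mem_erase.mp hmem
  refine mem_erase.mpr ⟨?_, μ.isLowerSet hde he⟩
  rintro rfl
  obtain ⟨hd1, hd2⟩ := hde
  rcases hd1.lt_or_eq with h1 | h1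
  · exact h.2.1 (μ.up_left_mem h1 hd2 he)
  rcases hd2.lt_or_eq with h2 | h2
  · exact h.2.2 (μ.up_left_mem hd1 h2 he)
  · exact hec (Prod.ext h1.symm h2.symm)

theorem IsAddable.isLowerSet_insert (h : μ.IsAddable c) :
    IsLowerSet (↑(insert c μ.cells) : Set (ℕ × ℕ)) := by
  intro e d hde he
  simp only [coe_insert, Set.mem_insert_iff, mem_coe, mem_cells] at he ⊢
  rcases he with rfl | he
  · obtain ⟨hd1, hd2⟩ := hde
    rcases hd1.lt_or_eq with h1 | h1
    · exact Or.inr (μ.up_left_mem le_rfl hd2 (h.2.1 d.1 h1))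
    rcases hd2.lt_or_eq with h2 | h2
    · exact Or.inr (μ.up_left_mem hd1 le_rfl (h.2.2 d.2 h2))
    · exact Or.inl (Prod.ext h1 h2)
  · exact Or.inr (μ.isLowerSet hde he)

open Classical in
/-- Junk value `μ` when `c` is not a removable corner. -/
noncomputable def eraseCorner (μ : YoungDiagram) (c : ℕ × ℕ) : YoungDiagram :=
  if h : μ.IsRemovable c then ⟨μ.cells.erase c, h.isLowerSet_erase⟩ else μ

open Classical in
/-- Junk value `μ` when `c` is not an addable cell. -/
noncomputable def addCorner (μ : YoungDiagram) (c : ℕ × ℕ) : YoungDiagram :=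
  if h : μ.IsAddable c then ⟨insert c μ.cells, h.isLowerSet_insert⟩ else μ

theorem IsRemovable.mem_eraseCorner (h : μ.IsRemovable c) {x : ℕ × ℕ} :
    x ∈ μ.eraseCorner c ↔ x ∈ μ ∧ x ≠ c := by
  rw [eraseCorner, dif_pos h, mem_mk, mem_erase, and_comm, mem_cells]

theorem IsAddable.mem_addCorner (h : μ.IsAddable c) {x : ℕ × ℕ} :
    x ∈ μ.addCorner c ↔ x ∈ μ ∨ x = c := by
  rw [addCorner, dif_pos h, mem_mk, mem_insert, or_comm, mem_cells]

theorem IsRemovable.card_eraseCorner (h : μ.IsRemovable c) :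
    (μ.eraseCorner c).card = μ.card - 1 := by
  rw [eraseCorner, dif_pos h]
  exact card_erase_of_mem h.1

theorem IsAddable.card_addCorner (h : μ.IsAddable c) :
    (μ.addCorner c).card = μ.card + 1 := by
  rw [addCorner, dif_pos h]
  exact card_insert_of_notMem h.1

theorem IsRemovable.isAddable_eraseCorner (h : μ.IsRemovable c) :
    (μ.eraseCorner c).IsAddable c := by
  refine ⟨fun hc => (h.mem_eraseCorner.mp hc).2 rfl, fun i hi => ?_, fun j hj => ?_⟩
  · exact h.mem_eraseCorner.mpr ⟨μ.up_left_mem hi.le le_rfl h.1, by simp [Prod.ext_iff, hi.ne]⟩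
  · exact h.mem_eraseCorner.mpr ⟨μ.up_left_mem le_rfl hj.le h.1, by simp [Prod.ext_iff, hj.ne]⟩

theorem IsAddable.isRemovable_addCorner (h : μ.IsAddable c) :
    (μ.addCorner c).IsRemovable c := by
  refine ⟨h.mem_addCorner.mpr (Or.inr rfl), ?_, ?_⟩ <;> rw [h.mem_addCorner] <;>
    rintro (hx | hx)
  · exact h.1 (μ.up_left_mem (Nat.le_succ _) le_rfl hx)
  · simp [Prod.ext_iff] at hx
  · exact h.1 (μ.up_left_mem le_rfl (Nat.le_succ _) hx)
  · simp [Prod.ext_iff] at hx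

theorem IsRemovable.addCorner_eraseCorner (h : μ.IsRemovable c) :
    (μ.eraseCorner c).addCorner c = μ := by
  refine SetLike.ext fun x => ?_
  rw [h.isAddable_eraseCorner.mem_addCorner, h.mem_eraseCorner]
  by_cases hx : x = c
  · simp [hx, h.1]
  · simp [hx]

theorem IsAddable.eraseCorner_addCorner (h : μ.IsAddable c) :
    (μ.addCorner c).eraseCorner c = μ := by
  refine SetLike.ext fun x => ?_
  rw [h.isRemovable_addCorner.mem_eraseCorner, h.mem_addCorner]
  by_cases hx : x = c
  · simp [hx, h.1]
  · simp [hx]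

theorem IsAddable.fst_le_card (h : μ.IsAddable c) : c.1 ≤ μ.card := by
  rcases Nat.eq_zero_or_pos c.1 with h0 | h0
  · simp [h0]
  · have := mem_iff_lt_colLen.mp (h.2.1 (c.1 - 1) (by omega))
    have := μ.colLen_le_card c.2
    omega

theorem IsAddable.snd_le_card (h : μ.IsAddable c) : c.2 ≤ μ.card := by
  rcases Nat.eq_zero_or_pos c.2 with h0 | h0
  · simp [h0]
  · have := mem_iff_lt_rowLen.mp (h.2.2 (c.2 - 1) (by omega))
    have := μ.rowLen_le_card c.1
    omega

open Classical in
noncomputable def removables (μ : YoungDiagram) : Finset (ℕ × ℕ) :=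
  μ.cells.filter μ.IsRemovable

open Classical in
noncomputable def addables (μ : YoungDiagram) : Finset (ℕ × ℕ) :=
  (range (μ.card + 1) ×ˢ range (μ.card + 1)).filter μ.IsAddable

theorem mem_removables : c ∈ μ.removables ↔ μ.IsRemovable c := by
  classical
  simp only [removables, mem_filter, mem_cells, and_iff_right_iff_imp]
  exact fun h => h.1

theorem mem_addables : c ∈ μ.addables ↔ μ.IsAddable c := by
  classical
  simp only [addables, mem_filter, mem_product, mem_range, and_iff_right_iff_imp]
  exact fun h => ⟨Nat.lt_succ_of_le h.fst_le_card, Nat.lt_succ_of_le h.snd_le_card⟩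

/-- Below the first row, addable cells and removable corners alternate: the addable cell at the
end of row `i + 1` corresponds to the removable corner at the end of row `i`. -/
theorem card_addables (μ : YoungDiagram) : #μ.addables = #μ.removables + 1 := by
  have h0 : (0, μ.rowLen 0) ∈ μ.addables := mem_addables.mpr (isAddable_iff.mpr ⟨rfl, .inl rfl⟩)
  have hA : ∀ c ∈ μ.addables.erase (0, μ.rowLen 0),
      ∃ i, c = (i + 1, μ.rowLen (i + 1)) ∧ μ.rowLen (i + 1) < μ.rowLen i := by
    rintro ⟨_ | i, j⟩ hc <;> rw [mem_erase, mem_addables, isAddable_iff] at hc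
    · exact absurd (by rw [hc.2.1]) hc.1
    · exact ⟨i, by rw [hc.2.1], by simpa using hc.2.2⟩
  have hR : ∀ {i j}, (i, j) ∈ μ.removables ↔ j + 1 = μ.rowLen i ∧ μ.rowLen (i + 1) ≤ j :=
    fun {_ _} => by rw [mem_removables, isRemovable_iff]
  rw [← card_erase_add_one h0]
  congr 1
  refine card_nbij' (fun c => (c.1 - 1, μ.rowLen (c.1 - 1) - 1))
    (fun c => (c.1 + 1, μ.rowLen (c.1 + 1))) ?_ ?_ ?_ ?_
  · intro c hc
    obtain ⟨i, rfl, hi⟩ := hA c hc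
    simp only [mem_coe, Nat.add_sub_cancel, hR]
    omega
  · rintro ⟨i, j⟩ hc
    rw [mem_coe, hR] at hc
    refine mem_erase.mpr ⟨by simp, mem_addables.mpr (isAddable_iff.mpr ⟨rfl, .inr ?_⟩)⟩
    dsimp only
    rw [Nat.add_sub_cancel]
    omega
  · intro c hc
    obtain ⟨i, rfl, -⟩ := hA c hc
    simp
  · rintro ⟨i, j⟩ hc
    rw [mem_coe, hR] at hc
    simp only [Nat.add_sub_cancel, Prod.mk.injEq, true_and]
    omega

section Exchange

variable (hcc : c ≠ c')
include hcc

theorem IsAddable.isRemovable_and_isAddable_eraseCorner (hc : μ.IsAddable c)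
    (hc' : (μ.addCorner c).IsRemovable c') :
    μ.IsRemovable c' ∧ (μ.eraseCorner c').IsAddable c := by
  obtain ⟨h1, h2, h3⟩ := hc'
  rw [hc.mem_addCorner] at h1 h2 h3
  have hrem : μ.IsRemovable c' :=
    ⟨h1.resolve_right hcc.symm, fun h => h2 (.inl h), fun h => h3 (.inl h)⟩
  refine ⟨hrem, fun h => hc.1 (hrem.mem_eraseCorner.mp h).1, fun i hi => ?_, fun j hj => ?_⟩
  · refine hrem.mem_eraseCorner.mpr ⟨hc.2.1 i hi, ?_⟩
    rintro rfl
    rcases Nat.lt_or_ge (i + 1) c.1 with h | h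
    · exact h2 (.inl (hc.2.1 (i + 1) h))
    · exact h2 (.inr (Prod.ext (by dsimp; omega) rfl))
  · refine hrem.mem_eraseCorner.mpr ⟨hc.2.2 j hj, ?_⟩
    rintro rfl
    rcases Nat.lt_or_ge (j + 1) c.2 with h | h
    · exact h3 (.inl (hc.2.2 (j + 1) h))
    · exact h3 (.inr (Prod.ext rfl (by dsimp; omega)))

theorem IsRemovable.isAddable_and_isRemovable_addCorner (hc' : μ.IsRemovable c')
    (hc : (μ.eraseCorner c').IsAddable c) :
    μ.IsAddable c ∧ (μ.addCorner c).IsRemovable c' := by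
  have hadd : μ.IsAddable c :=
    ⟨fun h => hc.1 (hc'.mem_eraseCorner.mpr ⟨h, hcc⟩),
      fun i hi => (hc'.mem_eraseCorner.mp (hc.2.1 i hi)).1,
      fun j hj => (hc'.mem_eraseCorner.mp (hc.2.2 j hj)).1⟩
  refine ⟨hadd, hadd.mem_addCorner.mpr (.inl hc'.1), ?_, ?_⟩ <;> rw [hadd.mem_addCorner] <;>
    rintro (h | rfl)
  · exact hc'.2.1 h
  · exact (hc'.mem_eraseCorner.mp (hc.2.1 c'.1 (by dsimp; omega))).2 rfl
  · exact hc'.2.2 h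
  · exact (hc'.mem_eraseCorner.mp (hc.2.2 c'.2 (by dsimp; omega))).2 rfl

theorem IsAddable.eraseCorner_addCorner_comm (hc : μ.IsAddable c)
    (hc' : (μ.addCorner c).IsRemovable c') :
    (μ.addCorner c).eraseCorner c' = (μ.eraseCorner c').addCorner c := by
  obtain ⟨hrem, hadd⟩ := hc.isRemovable_and_isAddable_eraseCorner hcc hc'
  refine SetLike.ext fun x => ?_
  rw [hc'.mem_eraseCorner, hc.mem_addCorner, hadd.mem_addCorner, hrem.mem_eraseCorner]
  by_cases hx : x = c
  · simp [hx, hcc]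
  · simp [hx]

end Exchange

theorem sum_addables_sum_removables_comm {M : Type*} [AddCommMonoid M] (μ : YoungDiagram)
    (g : YoungDiagram → M) :
    ∑ c ∈ μ.addables, ∑ c' ∈ (μ.addCorner c).removables.erase c,
        g ((μ.addCorner c).eraseCorner c') =
      ∑ c' ∈ μ.removables, ∑ c ∈ (μ.eraseCorner c').addables.erase c',
        g ((μ.eraseCorner c').addCorner c) := by
  rw [sum_sigma', sum_sigma']
  refine sum_nbij' (fun x => ⟨x.2, x.1⟩) (fun x => ⟨x.2, x.1⟩) ?_ ?_ (fun _ _ => rfl)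
    (fun _ _ => rfl) ?_ <;>
  rintro ⟨c, c'⟩ hx <;>
  simp only [mem_sigma, mem_erase, mem_addables, mem_removables] at hx ⊢ <;>
  obtain ⟨hc, hne, hc'⟩ := hx
  · obtain ⟨h, h'⟩ := hc.isRemovable_and_isAddable_eraseCorner (Ne.symm hne) hc'
    exact ⟨h, Ne.symm hne, h'⟩
  · obtain ⟨h, h'⟩ := hc.isAddable_and_isRemovable_addCorner hne hc'
    exact ⟨h, Ne.symm hne, h'⟩
  · exact congrArg g (hc.eraseCorner_addCorner_comm (Ne.symm hne) hc')

open Classical in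
/-- The number of saturated chains from `⊥` to `μ` in Young's lattice. -/
noncomputable def pathCount (μ : YoungDiagram) : ℕ :=
  if μ = ⊥ then 1 else
    ∑ c ∈ μ.removables.attach,
      have h := mem_removables.mp c.2
      have : (μ.eraseCorner c).card < μ.card := by
        rw [h.card_eraseCorner]
        exact Nat.sub_lt (card_pos.mpr ⟨_, h.1⟩) one_pos
      (μ.eraseCorner c).pathCount
termination_by μ.card

@[simp]
theorem pathCount_bot : pathCount ⊥ = 1 := by
  rw [pathCount, if_pos rfl]

theorem pathCount_eq_sum (h : μ ≠ ⊥) :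
    μ.pathCount = ∑ c ∈ μ.removables, (μ.eraseCorner c).pathCount := by
  rw [pathCount, if_neg h, sum_attach μ.removables fun c => (μ.eraseCorner c).pathCount]

/-- The relation `DU - UD = 1` between the up and down operators of Young's lattice. -/
theorem sum_addables_pathCount (μ : YoungDiagram) :
    ∑ c ∈ μ.addables, (μ.addCorner c).pathCount = (μ.card + 1) * μ.pathCount := by
  induction hn : μ.card using Nat.strong_induction_on generalizing μ with
  | _ n ih =>
  have hsplit : ∀ c ∈ μ.addables, (μ.addCorner c).pathCount = μ.pathCount +
      ∑ c' ∈ (μ.addCorner c).removables.erase c, ((μ.addCorner c).eraseCorner c').pathCount := by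
    intro c hc
    have hc := mem_addables.mp hc
    rw [pathCount_eq_sum (ne_bot_of_mem hc.isRemovable_addCorner.1),
      ← add_sum_erase _ _ (mem_removables.mpr hc.isRemovable_addCorner), hc.eraseCorner_addCorner]
  have hinner : ∀ c' ∈ μ.removables,
      ∑ c ∈ (μ.eraseCorner c').addables.erase c', ((μ.eraseCorner c').addCorner c).pathCount +
        μ.pathCount = n * (μ.eraseCorner c').pathCount := by
    intro c' hc'
    have hc' := mem_removables.mp hc'
    have hcard : (μ.eraseCorner c').card + 1 = n := by
      rw [hc'.card_eraseCorner, ← hn]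
      exact Nat.sub_add_cancel (card_pos.mpr ⟨_, hc'.1⟩)
    have hμ : μ.pathCount = ((μ.eraseCorner c').addCorner c').pathCount := by
      rw [hc'.addCorner_eraseCorner]
    rw [hμ, sum_erase_add _ _ (mem_addables.mpr hc'.isAddable_eraseCorner), ← hcard]
    exact ih _ (by omega) _ rfl
  have hrec : n * μ.pathCount = ∑ c' ∈ μ.removables, n * (μ.eraseCorner c').pathCount := by
    rcases eq_or_ne μ ⊥ with rfl | hμ
    · obtain rfl : n = 0 := hn ▸ card_eq_zero_iff.mpr rfl
      simp
    · rw [pathCount_eq_sum hμ, mul_sum]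
  have hsum := sum_congr rfl hinner
  rw [sum_add_distrib, sum_const, smul_eq_mul, ← hrec] at hsum
  rw [sum_congr rfl hsplit, sum_add_distrib, sum_const, smul_eq_mul,
    sum_addables_sum_removables_comm, card_addables]
  linarith

noncomputable def withCard (d : ℕ) : Finset YoungDiagram :=
  ((range d ×ˢ range d).powersetCard d).preimage cells
    (Set.injOn_of_injective fun _ _ => YoungDiagram.ext)

theorem mem_withCard {d : ℕ} : μ ∈ withCard d ↔ μ.card = d := by
  rw [withCard, Finset.mem_preimage, mem_powersetCard, and_iff_right_iff_imp]
  rintro rfl ⟨i, j⟩ h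
  rw [mem_product, mem_range, mem_range]
  exact ⟨(mem_iff_lt_colLen.mp h).trans_le (μ.colLen_le_card j),
    (mem_iff_lt_rowLen.mp h).trans_le (μ.rowLen_le_card i)⟩

theorem sum_pathCount_sq (d : ℕ) : ∑ μ ∈ withCard d, μ.pathCount ^ 2 = d ! := by
  induction d with
  | zero =>
    have : withCard 0 = {⊥} := by
      ext μ
      rw [mem_withCard, mem_singleton, card_eq_zero_iff]
    simp [this]
  | succ d ih =>
    calc ∑ μ ∈ withCard (d + 1), μ.pathCount ^ 2
        = ∑ μ ∈ withCard (d + 1), ∑ c ∈ μ.removables,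
            μ.pathCount * (μ.eraseCorner c).pathCount := by
          refine sum_congr rfl fun μ hμ => ?_
          have hμ : μ ≠ ⊥ := card_eq_zero_iff.not.mp (by rw [mem_withCard.mp hμ]; omega)
          rw [sq, ← mul_sum, ← pathCount_eq_sum hμ]
      _ = ∑ ν ∈ withCard d, ∑ c ∈ ν.addables, (ν.addCorner c).pathCount * ν.pathCount := by
          rw [sum_sigma', sum_sigma']
          refine sum_nbij' (fun x => ⟨x.1.eraseCorner x.2, x.2⟩)
            (fun x => ⟨x.1.addCorner x.2, x.2⟩) ?_ ?_ ?_ ?_ ?_ <;>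
          rintro ⟨μ, c⟩ hx <;>
          simp only [mem_sigma, mem_withCard, mem_removables, mem_addables] at hx
          · refine mem_sigma.mpr ⟨mem_withCard.mpr ?_, mem_addables.mpr hx.2.isAddable_eraseCorner⟩
            rw [hx.2.card_eraseCorner, hx.1, Nat.add_sub_cancel]
          · exact mem_sigma.mpr ⟨mem_withCard.mpr (by rw [hx.2.card_addCorner, hx.1]),
              mem_removables.mpr hx.2.isRemovable_addCorner⟩
          · simp only [hx.2.addCorner_eraseCorner]
          · simp only [hx.2.eraseCorner_addCorner]
          · simp only [hx.2.addCorner_eraseCorner]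
      _ = ∑ ν ∈ withCard d, (d + 1) * ν.pathCount ^ 2 := by
          refine sum_congr rfl fun ν hν => ?_
          rw [← sum_mul, sum_addables_pathCount, mem_withCard.mp hν, sq, mul_assoc]
      _ = (d + 1)! := by rw [← mul_sum, ih, Nat.factorial_succ]

theorem pathCount_sq_le_factorial (μ : YoungDiagram) : μ.pathCount ^ 2 ≤ μ.card ! := by
  rw [← sum_pathCount_sq]
  exact single_le_sum (f := fun ν => ν.pathCount ^ 2) (fun _ _ => Nat.zero_le _)
    (mem_withCard.mpr rfl)

structure IsStandardTableau (μ : YoungDiagram) (T : ℕ × ℕ → ℕ) : Prop where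
  eq_zero_of_notMem : ∀ p ∉ μ, T p = 0
  bijOn : Set.BijOn T μ (Set.Icc 1 μ.card)
  row_lt : ∀ i j j', j < j' → (i, j') ∈ μ → T (i, j) < T (i, j')
  col_lt : ∀ i i' j, i < i' → (i', j) ∈ μ → T (i, j) < T (i', j)

namespace IsStandardTableau

variable {T : ℕ × ℕ → ℕ} (hT : μ.IsStandardTableau T)
include hT

theorem le_card (hc : c ∈ μ) : T c ≤ μ.card :=
  (hT.bijOn.mapsTo hc).2

theorem isRemovable_of_eq_card (hc : c ∈ μ) (hTc : T c = μ.card) : μ.IsRemovable c := by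
  obtain ⟨i, j⟩ := c
  refine ⟨hc, fun (h : (i + 1, j) ∈ μ) => ?_, fun (h : (i, j + 1) ∈ μ) => ?_⟩
  · have := hT.col_lt i (i + 1) j i.lt_succ_self h
    have := hT.le_card h
    omega
  · have := hT.row_lt i j (j + 1) j.lt_succ_self h
    have := hT.le_card h
    omega

theorem eraseCorner (hc : c ∈ μ) (hTc : T c = μ.card) :
    (μ.eraseCorner c).IsStandardTableau (Function.update T c 0) := by
  have hrem := hT.isRemovable_of_eq_card hc hTc
  have hne : ∀ {p}, p ∈ μ.eraseCorner c → Function.update T c 0 p = T p :=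
    fun hp => Function.update_of_ne (hrem.mem_eraseCorner.mp hp).2 _ _
  refine ⟨fun p hp => ?_, ?_, fun i j j' hj hp => ?_, fun i i' j hi hp => ?_⟩
  · rcases eq_or_ne p c with rfl | hpc
    · exact Function.update_self ..
    · rw [Function.update_of_ne hpc]
      exact hT.eq_zero_of_notMem p fun h => hp (hrem.mem_eraseCorner.mpr ⟨h, hpc⟩)
  · have hset : ((μ.eraseCorner c : YoungDiagram) : Set (ℕ × ℕ)) = ↑μ \ {c} :=
      Set.ext fun p => hrem.mem_eraseCorner
    have hIcc : Set.Icc 1 (μ.eraseCorner c).card = Set.Icc 1 μ.card \ {T c} := by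
      ext v
      simp only [hrem.card_eraseCorner, hTc, Set.mem_sdiff, Set.mem_Icc, Set.mem_singleton_iff]
      omega
    rw [hset, hIcc]
    exact (hT.bijOn.sdiff_singleton hc).congr fun p hp => (hne (hrem.mem_eraseCorner.mpr hp)).symm
  · rw [hne hp, hne ((μ.eraseCorner c).up_left_mem le_rfl hj.le hp)]
    exact hT.row_lt i j j' hj (hrem.mem_eraseCorner.mp hp).1
  · rw [hne hp, hne ((μ.eraseCorner c).up_left_mem hi.le le_rfl hp)]
    exact hT.col_lt i i' j hi (hrem.mem_eraseCorner.mp hp).1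

end IsStandardTableau

instance (μ : YoungDiagram) : Finite {T // μ.IsStandardTableau T} :=
  finite_subtype_of_eq_zero_off (C := μ.cells) (fun _ hT => hT.eq_zero_of_notMem)
    fun _ hT _ hp => hT.le_card hp

/-- The branching rule, as an inequality: the entry `|μ|` of a standard tableau sits in a
removable corner, and deleting it leaves a standard tableau of the smaller shape. -/
theorem card_isStandardTableau_le_pathCount (μ : YoungDiagram) :
    Nat.card {T // μ.IsStandardTableau T} ≤ μ.pathCount := by
  induction hn : μ.card using Nat.strong_induction_on generalizing μ with
  | _ n ih =>
  rcases eq_or_ne μ ⊥ with rfl | hμ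
  · rw [pathCount_bot, Finite.card_le_one_iff_subsingleton]
    refine ⟨fun T T' => Subtype.ext (funext fun p => ?_)⟩
    rw [T.2.eq_zero_of_notMem p (notMem_bot p), T'.2.eq_zero_of_notMem p (notMem_bot p)]
  have hpos : 0 < μ.card := Nat.pos_of_ne_zero (card_eq_zero_iff.not.mpr hμ)
  choose top htop using fun T : {T // μ.IsStandardTableau T} =>
    T.2.bijOn.surjOn (Set.mem_Icc.mpr ⟨hpos, le_rfl⟩)
  let Φ (T : {T // μ.IsStandardTableau T}) :
      Σ c : μ.removables, {T' // (μ.eraseCorner c).IsStandardTableau T'} :=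
    ⟨⟨top T, mem_removables.mpr (T.2.isRemovable_of_eq_card (htop T).1 (htop T).2)⟩,
      ⟨_, T.2.eraseCorner (htop T).1 (htop T).2⟩⟩
  have hΦ : Φ.Injective := by
    have hrestore : ∀ T, Function.update (Φ T).2.1 (Φ T).1 μ.card = T.1 := fun T => by
      rw [Function.update_idem]
      exact Function.update_eq_self_iff.mpr (htop T).2.symm
    exact fun T T' h => Subtype.ext (by rw [← hrestore T, ← hrestore T', h])
  calc Nat.card {T // μ.IsStandardTableau T}
      ≤ Nat.card (Σ c : μ.removables, {T' // (μ.eraseCorner c).IsStandardTableau T'}) :=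
        Nat.card_le_card_of_injective Φ hΦ
    _ = ∑ c : μ.removables, Nat.card {T' // (μ.eraseCorner c).IsStandardTableau T'} :=
        Nat.card_sigma
    _ ≤ ∑ c : μ.removables, (μ.eraseCorner c).pathCount := by
        refine sum_le_sum fun c _ => ih _ ?_ _ rfl
        rw [(mem_removables.mp c.2).card_eraseCorner, ← hn]
        exact Nat.sub_lt hpos one_pos
    _ = μ.pathCount := by
        rw [sum_coe_sort μ.removables fun c => (μ.eraseCorner c).pathCount, pathCount_eq_sum hμ]

theorem mem_cellsOfRowLens_iff_getD {w : List ℕ} {c : ℕ × ℕ} :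
    c ∈ YoungDiagram.cellsOfRowLens w ↔ c.2 < w.getD c.1 0 := by
  rw [YoungDiagram.mem_cellsOfRowLens]
  by_cases h : c.1 < w.length <;> simp [h]

theorem card_cellsOfRowLens (w : List ℕ) : #(YoungDiagram.cellsOfRowLens w) = w.sum := by
  induction w with
  | nil => rfl
  | cons a w ih =>
    rw [YoungDiagram.cellsOfRowLens, card_union_of_disjoint, card_product, card_map, ih,
      card_singleton, card_range, one_mul, List.sum_cons]
    refine disjoint_left.mpr fun _ h h' => ?_
    obtain ⟨⟨i, j⟩, -, rfl⟩ := mem_map.mp h'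
    simp at h

end YoungDiagram

section Lists

variable {L : List ℕ} {T : ℕ × ℕ → ℕ}

theorem isSYT_iff_isStandardTableau (hL : L.Pairwise (· ≥ ·)) :
    IsSYT L T ↔ (YoungDiagram.ofRowLens L hL.sortedGE).IsStandardTableau T := by
  have hmem : ∀ p, p ∈ YoungDiagram.ofRowLens L hL.sortedGE ↔ p.2 < L.getD p.1 0 :=
    fun _ => YoungDiagram.mem_cellsOfRowLens_iff_getD
  have hcells : (YoungDiagram.ofRowLens L hL.sortedGE : Set (ℕ × ℕ)) = {p | p.2 < L.getD p.1 0} :=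
    Set.ext hmem
  have hcard : (YoungDiagram.ofRowLens L hL.sortedGE).card = L.sum :=
    YoungDiagram.card_cellsOfRowLens L
  constructor
  · rintro ⟨hzero, hbij, hrow, hcol⟩
    exact ⟨fun p hp => hzero p (by rwa [hmem] at hp), by rwa [hcells, hcard],
      fun i j j' hj hp => hrow i j j' hj ((hmem _).mp hp),
      fun i i' j hi hp => hcol i i' j hi ((hmem _).mp hp)⟩
  · rintro ⟨hzero, hbij, hrow, hcol⟩
    exact ⟨fun p hp => hzero p (by rwa [hmem]), by rwa [hcells, hcard] at hbij,
      fun i j j' hj hp => hrow i j j' hj ((hmem _).mpr hp),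
      fun i i' j hi hp => hcol i i' j hi ((hmem _).mpr hp)⟩

theorem sytCount_sq_le_factorial (hL : L.Pairwise (· ≥ ·)) : sytCount L ^ 2 ≤ L.sum ! := by
  have h := (YoungDiagram.ofRowLens L hL.sortedGE).card_isStandardTableau_le_pathCount
  rw [← Nat.card_congr (Equiv.subtypeEquivRight fun _ => isSYT_iff_isStandardTableau hL)] at h
  calc sytCount L ^ 2 ≤ (YoungDiagram.ofRowLens L hL.sortedGE).pathCount ^ 2 :=
        Nat.pow_le_pow_left h 2
    _ ≤ (YoungDiagram.ofRowLens L hL.sortedGE).card ! := YoungDiagram.pathCount_sq_le_factorial _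
    _ = L.sum ! := congrArg _ (YoungDiagram.card_cellsOfRowLens L)

end Lists

section Rank

variable {α : Type*} [LinearOrder α] (S : Finset α)

def rankIn (v : α) : ℕ := #{x ∈ S | x ≤ v}

variable {S}

theorem rankIn_lt_rankIn {v w : α} (hw : w ∈ S) (hvw : v < w) : rankIn S v < rankIn S w := by
  refine card_lt_card ((ssubset_iff_of_subset fun x hx => ?_).mpr ⟨w, ?_, ?_⟩)
  · rw [mem_filter] at hx ⊢
    exact ⟨hx.1, hx.2.trans hvw.le⟩
  · exact mem_filter.mpr ⟨hw, le_rfl⟩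
  · exact fun h => hvw.not_ge (mem_filter.mp h).2

theorem rankIn_bijOn : Set.BijOn (rankIn S) S (Set.Icc 1 #S) := by
  have hmaps : Set.MapsTo (rankIn S) S (Set.Icc 1 #S) := fun v hv =>
    ⟨card_pos.mpr ⟨v, mem_filter.mpr ⟨hv, le_rfl⟩⟩, card_le_card (filter_subset _ _)⟩
  have hinj : Set.InjOn (rankIn S) S := fun v hv w hw h => by
    rcases lt_trichotomy v w with hlt | heq | hgt
    · exact absurd h (rankIn_lt_rankIn hw hlt).ne
    · exact heq
    · exact absurd h (rankIn_lt_rankIn hv hgt).ne'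
  refine ⟨hmaps, hinj, ?_⟩
  rw [← coe_Icc]
  exact surjOn_of_injOn_of_card_le _ (by rwa [coe_Icc]) hinj (by simp)

end Rank

section FirstRow

variable {a : ℕ} {M : List ℕ} {T : ℕ × ℕ → ℕ}

noncomputable def lowerEntries (M : List ℕ) (T : ℕ × ℕ → ℕ) : Finset ℕ :=
  (YoungDiagram.cellsOfRowLens M).image fun p => T (p.1 + 1, p.2)

noncomputable def standardizeTail (M : List ℕ) (T : ℕ × ℕ → ℕ) (p : ℕ × ℕ) : ℕ :=
  if p.2 < M.getD p.1 0 then rankIn (lowerEntries M T) (T (p.1 + 1, p.2)) else 0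

theorem mem_cellsOfRowLens_iff_succ_mem {p : ℕ × ℕ} :
    p ∈ YoungDiagram.cellsOfRowLens M ↔
      (p.1 + 1, p.2) ∈ {q : ℕ × ℕ | q.2 < (a :: M).getD q.1 0} := by
  simp [YoungDiagram.mem_cellsOfRowLens_iff_getD]

variable (hT : IsSYT (a :: M) T)
include hT

theorem bijOn_lowerEntries :
    Set.BijOn (fun p : ℕ × ℕ => T (p.1 + 1, p.2)) (YoungDiagram.cellsOfRowLens M)
      (lowerEntries M T) := by
  refine ⟨fun p hp => mem_coe.mpr (mem_image_of_mem _ hp), fun p hp q hq h => ?_, ?_⟩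
  · have := hT.2.1.injOn (mem_cellsOfRowLens_iff_succ_mem.mp hp)
      (mem_cellsOfRowLens_iff_succ_mem.mp hq) h
    simp only [Prod.mk.injEq, Nat.add_right_cancel_iff] at this
    exact Prod.ext this.1 this.2
  · rw [lowerEntries, coe_image]
    exact Set.surjOn_image _ _

theorem card_lowerEntries : #(lowerEntries M T) = M.sum := by
  rw [← YoungDiagram.card_cellsOfRowLens, lowerEntries]
  exact card_image_of_injOn (bijOn_lowerEntries hT).injOn

theorem lowerEntries_subset : lowerEntries M T ⊆ Finset.Icc 1 (a + M.sum) := by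
  intro v hv
  obtain ⟨p, hp, rfl⟩ := mem_image.mp hv
  have := hT.2.1.mapsTo (mem_cellsOfRowLens_iff_succ_mem.mp hp)
  rwa [List.sum_cons, Set.mem_Icc, ← mem_Icc] at this

theorem isSYT_standardizeTail : IsSYT M (standardizeTail M T) := by
  refine ⟨fun p hp => if_neg hp, ?_, fun i j j' hj hj' => ?_, fun i i' j hi hj => ?_⟩
  · have hcells : {p : ℕ × ℕ | p.2 < M.getD p.1 0} = ↑(YoungDiagram.cellsOfRowLens M) :=
      Set.ext fun _ => YoungDiagram.mem_cellsOfRowLens_iff_getD.symm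
    rw [← card_lowerEntries hT, hcells]
    exact (rankIn_bijOn.comp (bijOn_lowerEntries hT)).congr fun p hp =>
      (if_pos (YoungDiagram.mem_cellsOfRowLens_iff_getD.mp hp)).symm
  · have hw := (bijOn_lowerEntries hT).mapsTo
      (YoungDiagram.mem_cellsOfRowLens_iff_getD (c := (i, j')) |>.mpr hj')
    simp only [standardizeTail, if_pos hj', if_pos (hj.trans hj')]
    exact rankIn_lt_rankIn hw (hT.2.2.1 (i + 1) j j' hj (by rwa [List.getD_cons_succ]))
  · have hw := (bijOn_lowerEntries hT).mapsTo
      (YoungDiagram.mem_cellsOfRowLens_iff_getD (c := (i', j)) |>.mpr hj)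
    simp only [standardizeTail, if_pos hj]
    split_ifs
    · exact rankIn_lt_rankIn hw (hT.2.2.2 (i + 1) (i' + 1) j (by omega)
        (by rwa [List.getD_cons_succ]))
    · exact (rankIn_bijOn.mapsTo hw).1

theorem firstRow_mem_sdiff_lowerEntries {k : ℕ} (hk : k < a) :
    T (0, k) ∈ Finset.Icc 1 (a + M.sum) \ lowerEntries M T := by
  have hk' : (0, k).2 < (a :: M).getD (0, k).1 0 := by rwa [List.getD_cons_zero]
  refine mem_sdiff.mpr ⟨?_, fun h => ?_⟩
  · have := hT.2.1.mapsTo hk'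
    rwa [List.sum_cons, Set.mem_Icc, ← mem_Icc] at this
  · obtain ⟨p, hp, hTp⟩ := mem_image.mp h
    have := hT.2.1.injOn (mem_cellsOfRowLens_iff_succ_mem.mp hp) hk' hTp
    simp at this

omit hT in
/-- The first row is the increasing enumeration of the complement of the lower entries, and
the lower entries are recovered from their ranks. -/
theorem eq_of_lowerEntries_eq_of_standardizeTail_eq {T T' : ℕ × ℕ → ℕ} (hT : IsSYT (a :: M) T)
    (hT' : IsSYT (a :: M) T') (hS : lowerEntries M T = lowerEntries M T')
    (hstd : standardizeTail M T = standardizeTail M T') : T = T' := by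
  funext ⟨i, j⟩
  by_cases hp : j < (a :: M).getD i 0
  swap
  · rw [hT.1 _ hp, hT'.1 _ hp]
  cases i with
  | succ i =>
    rw [List.getD_cons_succ] at hp
    have hc := (YoungDiagram.mem_cellsOfRowLens_iff_getD (c := (i, j))).mpr hp
    have h := congrFun hstd (i, j)
    simp only [standardizeTail, if_pos hp, hS] at h
    exact rankIn_bijOn.injOn (hS ▸ (bijOn_lowerEntries hT).mapsTo hc)
      ((bijOn_lowerEntries hT').mapsTo hc) h
  | zero =>
    rw [List.getD_cons_zero] at hp
    have hcard : #(Finset.Icc 1 (a + M.sum) \ lowerEntries M T) = a := by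
      rw [card_sdiff_of_subset (lowerEntries_subset hT), Nat.card_Icc, card_lowerEntries hT]
      omega
    have hmono : ∀ {T}, IsSYT (a :: M) T → StrictMono fun k : Fin a => T (0, k) :=
      fun hT _ k hk => hT.2.2.1 0 _ _ hk (by rw [List.getD_cons_zero]; exact k.2)
    have := (orderEmbOfFin_unique hcard (fun k => firstRow_mem_sdiff_lowerEntries hT k.2)
      (hmono hT)).trans (orderEmbOfFin_unique hcard
        (fun k => hS ▸ firstRow_mem_sdiff_lowerEntries hT' k.2) (hmono hT')).symm
    exact congrFun this ⟨j, hp⟩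

end FirstRow

theorem finite_isSYT (M : List ℕ) : Finite {T // IsSYT M T} :=
  finite_subtype_of_eq_zero_off (C := YoungDiagram.cellsOfRowLens M) (N := M.sum)
    (fun _ hT _ hp => hT.1 _ (mt YoungDiagram.mem_cellsOfRowLens_iff_getD.mpr hp))
    fun _ hT _ hp => (hT.2.1.mapsTo (YoungDiagram.mem_cellsOfRowLens_iff_getD.mp hp)).2

theorem sytCount_cons_le (a : ℕ) (M : List ℕ) :
    sytCount (a :: M) ≤ (a + M.sum).choose M.sum * sytCount M := by
  have := finite_isSYT M
  let Φ (T : {T // IsSYT (a :: M) T}) :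
      powersetCard M.sum (Finset.Icc 1 (a + M.sum)) × {T // IsSYT M T} :=
    (⟨lowerEntries M T, mem_powersetCard.mpr ⟨lowerEntries_subset T.2, card_lowerEntries T.2⟩⟩,
      ⟨_, isSYT_standardizeTail T.2⟩)
  have hΦ : Φ.Injective := fun T T' h => Subtype.ext <|
    eq_of_lowerEntries_eq_of_standardizeTail_eq T.2 T'.2 (congrArg (·.1.1) h)
      (congrArg (·.2.1) h)
  calc sytCount (a :: M)
      ≤ Nat.card (powersetCard M.sum (Finset.Icc 1 (a + M.sum)) × {T // IsSYT M T}) :=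
        Nat.card_le_card_of_injective Φ hΦ
    _ = (a + M.sum).choose M.sum * sytCount M := by
        rw [Nat.card_prod, Nat.card_eq_finsetCard, card_powersetCard, Nat.card_Icc,
          Nat.add_sub_cancel, sytCount]

theorem sytCount_le_choose_mul_sytCount_tail (L : List ℕ) :
    sytCount L ≤ L.sum.choose L.tail.sum * sytCount L.tail := by
  cases L with
  | nil => simp
  | cons a M => simpa using sytCount_cons_le a M

theorem syt_dim_upper_bound (n d : ℕ) (hdn : d ≤ n)
    (L : List ℕ) (hL : IsPartitionList L n) (h1 : L.headD 0 = n - d) :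
    (sytCount L : ℝ) ≤ (n : ℝ) ^ d / Real.sqrt (Nat.factorial d) := by
  obtain ⟨hsort, -, hsum⟩ := hL
  have htail : L.tail.sum = d := by
    cases L with
    | nil =>
      simp only [List.sum_nil, List.tail_nil] at hsum ⊢
      omega
    | cons a M =>
      simp only [List.headD_cons, List.sum_cons, List.tail_cons] at h1 hsum ⊢
      omega
  have hfac : (0 : ℝ) < d ! := by exact_mod_cast d.factorial_pos
  have hsq : (sytCount L.tail : ℝ) ≤ √(d ! : ℝ) := by
    rw [Real.le_sqrt (by positivity) hfac.le, ← htail]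
    exact_mod_cast sytCount_sq_le_factorial hsort.tail
  calc (sytCount L : ℝ) ≤ n.choose d * sytCount L.tail := by
        rw [← hsum, ← htail]
        exact_mod_cast sytCount_le_choose_mul_sytCount_tail L
    _ ≤ n ^ d / d ! * √(d ! : ℝ) := by
        gcongr
        exact Nat.choose_le_pow_div d n
    _ = n ^ d / √(d ! : ℝ) := by
        rw [div_mul_eq_mul_div, div_eq_div_iff hfac.ne' (Real.sqrt_pos.mpr hfac).ne', mul_assoc,
          Real.mul_self_sqrt hfac.le]
end

section
/- Let $n$ and $\ell$ be positive integers with $\ell < n$, and let $E$ be the event that a uniformly random permutation $\sigma \in S_n$ has exactly $\ell$ fixed points and all other cycles of length greater than $d$, where $d \ge 1$ and $n - \ell > d$. Then $\Pr[E] \ge \frac{1}{10 d \cdot \ell!}$. -/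
/-!
Let `a r` count the derangements of `Fin r` all of whose cycles are longer than `d`. Choosing the
`n - ℓ` moved points gives at least `n.choose (n - ℓ) * a (n - ℓ)` permutations in the event, so its
probability is at least `a (n - ℓ) / ((n - ℓ)! * ℓ!)`, and it remains to show `r! ≤ 10 d * a r` for
`r > d`. Sorting by the length `k` of the cycle through a given point,
`a r ≥ ∑_{d < k ≤ r} (r-1)!/(r-k)! * a (r - k)`. The term `k = r` is `(r-1)!`, and by induction each
of the `r - 2d - 1` terms with `r - k > d` is at least `(r-1)!/(10 d)`, so
`10 d * a r ≥ (10 d + r - 2d - 1) * (r-1)! ≥ r!`.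
-/

/-- The probability that a uniformly random permutation of `{1, …, r}` has all its
cycles (including fixed points) of length strictly greater than `d`.  Since
`Equiv.Perm.cycleType` lists only the nontrivial cycle lengths, this event is
`σ.cycleType.sum = r` (no fixed points) together with all entries of the cycle
type exceeding `d`. -/
noncomputable def probAllCyclesLong (d r : ℕ) : ℝ :=
  (Nat.card {σ : Equiv.Perm (Fin r) //
      σ.cycleType.sum = r ∧ ∀ k ∈ σ.cycleType, d < k} : ℝ) / (Nat.factorial r : ℝ)

open Equiv Equiv.Perm Finset Nat

def IsLongCycleType (d m : ℕ) (t : Multiset ℕ) : Prop :=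
  t.sum = m ∧ ∀ k ∈ t, d < k

instance (d m : ℕ) : DecidablePred (IsLongCycleType d m) :=
  fun _ => inferInstanceAs (Decidable (_ ∧ _))

def longCycleCount (d r : ℕ) : ℕ :=
  #{σ : Perm (Fin r) | IsLongCycleType d r σ.cycleType}

theorem longCycleCount_zero (d : ℕ) : longCycleCount d 0 = 1 := by
  rw [longCycleCount, card_eq_one]
  exact ⟨1, by ext σ; simp [Subsingleton.elim σ 1, IsLongCycleType]⟩

section Counting

variable {α : Type*} [Fintype α] [DecidableEq α] {d : ℕ}

theorem longCycleCount_le_card_support_eq (s : Finset α) :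
    longCycleCount d #s ≤ #{ρ : Perm α | IsLongCycleType d #s ρ.cycleType ∧ ρ.support = s} := by
  refine card_le_card_of_injOn (fun τ => τ.extendDomain s.equivFin.symm) ?_
    ((extendDomainHom_injective _).injOn)
  intro τ hτ
  simp only [mem_coe, mem_filter, mem_univ, true_and] at hτ ⊢
  refine ⟨by simpa using hτ, ?_⟩
  have hsupp : τ.support = univ := by
    apply eq_univ_of_card
    rw [← sum_cycleType, hτ.1, Fintype.card_fin]
  ext x
  simp only [support_extend_domain, hsupp, mem_map, mem_univ, true_and, asEmbedding_apply]
  exact ⟨fun ⟨a, ha⟩ => ha ▸ (s.equivFin.symm a).2, fun hx => ⟨s.equivFin ⟨x, hx⟩, by simp⟩⟩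

theorem longCycleCount_le_card_cycleOf_eq {c : Perm α} (hc : c.IsCycle) {x₀ : α}
    (hx₀ : x₀ ∈ c.support) (hd : d < #c.support) :
    longCycleCount d (Fintype.card α - #c.support) ≤
      #{σ : Perm α | IsLongCycleType d (Fintype.card α) σ.cycleType ∧ σ.cycleOf x₀ = c} := by
  have hrest := longCycleCount_le_card_support_eq (d := d) c.supportᶜ
  rw [card_compl] at hrest
  refine hrest.trans (card_le_card_of_injOn (c * ·) ?_ fun ρ _ ρ' _ h => mul_left_cancel h)
  intro ρ hρ
  simp only [mem_coe, mem_filter, mem_univ, true_and] at hρ ⊢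
  obtain ⟨⟨hsum, hlong⟩, hsupp⟩ := hρ
  have hdisj : c.Disjoint ρ :=
    disjoint_iff_disjoint_support.2 (hsupp ▸ disjoint_compl_right)
  have hρx₀ : ρ x₀ = x₀ := notMem_support.1 (by simpa [hsupp] using hx₀)
  refine ⟨⟨?_, ?_⟩, ?_⟩
  · rw [hdisj.cycleType_mul, hc.cycleType, Multiset.sum_add, Multiset.sum_singleton, hsum]
    have := card_le_univ c.support
    omega
  · rw [hdisj.cycleType_mul, hc.cycleType]
    intro k hk
    rcases Multiset.mem_add.1 hk with hk | hk
    · exact Multiset.mem_singleton.1 hk ▸ hd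
    · exact hlong k hk
  · rw [hdisj.cycleOf_mul_distrib, hc.cycleOf_eq (mem_support.1 hx₀),
      (cycleOf_eq_one_iff ρ).2 hρx₀, mul_one]

open scoped Classical in
theorem descFactorial_le_card_isCycle (x₀ : α) {k : ℕ} (hk : 2 ≤ k) :
    (Fintype.card α - 1).descFactorial (k - 1) ≤
      #{c : Perm α | c.IsCycle ∧ x₀ ∈ c.support ∧ #c.support = k} := by
  let cycleList (f : Fin (k - 1) ↪ {x // x ≠ x₀}) : List α := x₀ :: List.ofFn fun i => (f i : α)
  have hlength f : (cycleList f).length = k := by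
    simp only [cycleList, List.length_cons, List.length_ofFn]
    omega
  have hnodup f : (cycleList f).Nodup := by
    refine List.nodup_cons.2 ⟨?_, List.nodup_ofFn.2 fun i j hij => f.injective (Subtype.ext hij)⟩
    simp only [List.mem_ofFn, not_exists]
    exact fun i => (f i).2
  have hcard : Fintype.card (Fin (k - 1) ↪ {x // x ≠ x₀}) =
      (Fintype.card α - 1).descFactorial (k - 1) := by
    simp [Fintype.card_embedding_eq, Fintype.card_subtype_compl]
  rw [← hcard, ← Finset.card_univ]
  refine card_le_card_of_injOn (fun f => (cycleList f).formPerm) ?_ ?_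
  · intro f _
    have hsupp : (cycleList f).formPerm.support = (cycleList f).toFinset :=
      List.support_formPerm_of_nodup _ (hnodup f) fun x hx => by
        have := congrArg List.length hx
        rw [hlength, List.length_singleton] at this
        omega
    simp only [mem_coe, mem_filter, mem_univ, true_and, hsupp]
    refine ⟨List.isCycle_formPerm (hnodup f) (hlength f ▸ hk), by simp [cycleList], ?_⟩
    rw [List.toFinset_card_of_nodup (hnodup f), hlength]
  · intro f _ g _ hfg
    ext i
    -- the entries of the list are the iterates of `x₀` under its `formPerm`
    have hf := List.formPerm_pow_apply_head x₀ _ (hnodup f) (i + 1)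
    have hg := List.formPerm_pow_apply_head x₀ _ (hnodup g) (i + 1)
    simp only at hfg
    rw [hfg, hg] at hf
    have hi : (i : ℕ) + 1 < k - 1 + 1 := by omega
    simpa [Nat.mod_eq_of_lt hi] using hf.symm

theorem sum_descFactorial_mul_longCycleCount_le [Nonempty α] (hd : 1 ≤ d) :
    ∑ k ∈ Ioc d (Fintype.card α),
        (Fintype.card α - 1).descFactorial (k - 1) * longCycleCount d (Fintype.card α - k) ≤
      #{σ : Perm α | IsLongCycleType d (Fintype.card α) σ.cycleType} := by
  classical
  obtain ⟨x₀⟩ := ‹Nonempty α›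
  set n := Fintype.card α
  set C : Finset (Perm α) := {c | c.IsCycle ∧ x₀ ∈ c.support ∧ d < #c.support}
  set T : Finset (Perm α) := {σ | IsLongCycleType d n σ.cycleType}
  calc ∑ k ∈ Ioc d n, (n - 1).descFactorial (k - 1) * longCycleCount d (n - k)
      ≤ ∑ k ∈ Ioc d n, ∑ c ∈ C with #c.support = k, longCycleCount d (n - #c.support) := by
        gcongr with k hk
        rw [sum_const_nat fun c hc => by rw [(mem_filter.1 hc).2]]
        gcongr
        have hk2 : 2 ≤ k := by have := (mem_Ioc.1 hk).1; omega
        refine (descFactorial_le_card_isCycle x₀ hk2).trans (card_le_card ?_)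
        intro c hc
        simp only [C, mem_filter, mem_univ, true_and] at hc ⊢
        exact ⟨⟨hc.1, hc.2.1, hc.2.2 ▸ (mem_Ioc.1 hk).1⟩, hc.2.2⟩
    _ = ∑ c ∈ C, longCycleCount d (n - #c.support) :=
        sum_fiberwise_of_maps_to (fun c hc => mem_Ioc.2 ⟨(mem_filter.1 hc).2.2.2, card_le_univ _⟩) _
    _ ≤ ∑ c ∈ C, #{σ ∈ T | σ.cycleOf x₀ = c} := by
        gcongr with c hc
        obtain ⟨hcyc, hx₀, hdc⟩ := (mem_filter.1 hc).2
        simpa only [T, filter_filter] using longCycleCount_le_card_cycleOf_eq hcyc hx₀ hdc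
    _ = #{σ ∈ T | σ.cycleOf x₀ ∈ C} := sum_card_fiberwise_eq_card_filter _ _ _
    _ ≤ #T := card_filter_le _ _

theorem choose_mul_longCycleCount_le (d m : ℕ) :
    (Fintype.card α).choose m * longCycleCount d m ≤
      #{σ : Perm α | IsLongCycleType d m σ.cycleType} := by
  set T : Finset (Perm α) := {σ | IsLongCycleType d m σ.cycleType}
  calc (Fintype.card α).choose m * longCycleCount d m
      = ∑ s ∈ powersetCard m (univ : Finset α), longCycleCount d #s := by
        rw [sum_const_nat fun s hs => by rw [(mem_powersetCard.1 hs).2], card_powersetCard,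
          Finset.card_univ]
    _ ≤ ∑ s ∈ powersetCard m univ, #{σ ∈ T | σ.support = s} := by
        gcongr with s hs
        simpa only [T, filter_filter, (mem_powersetCard.1 hs).2] using
          longCycleCount_le_card_support_eq (d := d) s
    _ = #{σ ∈ T | σ.support ∈ powersetCard m univ} := sum_card_fiberwise_eq_card_filter _ _ _
    _ ≤ #T := card_filter_le _ _

end Counting

theorem factorial_le_mul_longCycleCount {d : ℕ} (hd : 1 ≤ d) {r : ℕ} (hr : d < r) :
    r ! ≤ 10 * d * longCycleCount d r := by
  induction r using Nat.strong_induction_on with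
  | _ r ih =>
  set term : ℕ → ℕ := fun k => (r - 1).descFactorial (k - 1) * longCycleCount d (r - k)
  have hrec : ∑ k ∈ Ioc d r, term k ≤ longCycleCount d r := by
    have : Nonempty (Fin r) := ⟨⟨0, by omega⟩⟩
    have h := sum_descFactorial_mul_longCycleCount_le (α := Fin r) hd
    rw [Fintype.card_fin] at h
    exact h
  have hsplit : (r - 1)! + ∑ k ∈ Ioc d (r - d - 1), term k ≤ ∑ k ∈ Ioc d r, term k := by
    have hterm : term r = (r - 1)! := by
      simp [term, longCycleCount_zero, Nat.descFactorial_self]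
    rw [← hterm, ← sum_insert (by simp only [mem_Ioc]; omega)]
    exact sum_le_sum_of_subset fun k => by simp only [mem_insert, mem_Ioc]; omega
  have hlarge : ∀ k ∈ Ioc d (r - d - 1), (r - 1)! ≤ 10 * d * term k := by
    intro k hk
    rw [mem_Ioc] at hk
    calc (r - 1)! = (r - k)! * (r - 1).descFactorial (k - 1) := by
          rw [← Nat.factorial_mul_descFactorial (show k - 1 ≤ r - 1 by omega)]
          congr 2
          omega
      _ ≤ 10 * d * longCycleCount d (r - k) * (r - 1).descFactorial (k - 1) := by
          gcongr
          exact ih _ (by omega) (by omega)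
      _ = 10 * d * term k := by ring
  calc r ! = r * (r - 1)! := (Nat.mul_factorial_pred (by omega)).symm
    _ ≤ (10 * d + #(Ioc d (r - d - 1))) * (r - 1)! := by
        gcongr
        simp only [Nat.card_Ioc]
        omega
    _ = 10 * d * (r - 1)! + #(Ioc d (r - d - 1)) • (r - 1)! := by rw [add_mul, smul_eq_mul]
    _ ≤ 10 * d * (r - 1)! + ∑ k ∈ Ioc d (r - d - 1), 10 * d * term k := by
        gcongr
        exact card_nsmul_le_sum _ _ _ hlarge
    _ = 10 * d * ((r - 1)! + ∑ k ∈ Ioc d (r - d - 1), term k) := by rw [mul_add, mul_sum]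
    _ ≤ 10 * d * longCycleCount d r := by
        gcongr
        exact hsplit.trans hrec

theorem probAllCyclesLong_eq (d r : ℕ) : probAllCyclesLong d r = longCycleCount d r / r ! := by
  rw [probAllCyclesLong, Nat.card_eq_fintype_card, Fintype.card_subtype]
  rfl

theorem one_div_le_probAllCyclesLong {d r : ℕ} (hd : 1 ≤ d) (hr : d < r) :
    1 / (10 * d : ℝ) ≤ probAllCyclesLong d r := by
  rw [probAllCyclesLong_eq, div_le_div_iff₀ (by positivity) (by positivity), one_mul, mul_comm]
  exact_mod_cast factorial_le_mul_longCycleCount hd hr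

theorem prob_fixed_points_and_long_cycles_ge_general (n ℓ d : ℕ)
    (hd : 1 ≤ d) (hnℓ : d < n - ℓ) :
    1 / (10 * d * Nat.factorial ℓ : ℝ) ≤
      (Nat.card {σ : Equiv.Perm (Fin n) //
          σ.cycleType.sum = n - ℓ ∧ ∀ k ∈ σ.cycleType, d < k} : ℝ)
        / (Nat.factorial n : ℝ) := by
  have hcount : n.choose (n - ℓ) * longCycleCount d (n - ℓ) ≤ Nat.card {σ : Perm (Fin n) //
      σ.cycleType.sum = n - ℓ ∧ ∀ k ∈ σ.cycleType, d < k} := by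
    have h := choose_mul_longCycleCount_le (α := Fin n) d (n - ℓ)
    rw [Fintype.card_fin] at h
    rwa [Nat.card_eq_fintype_card, Fintype.card_subtype]
  have hfact : (n.choose (n - ℓ) * (n - ℓ)! * ℓ ! : ℝ) = n ! := by
    have h := Nat.choose_mul_factorial_mul_factorial (Nat.sub_le n ℓ)
    rw [Nat.sub_sub_self (by omega)] at h
    exact_mod_cast h
  calc 1 / (10 * d * ℓ ! : ℝ) = 1 / (10 * d) / ℓ ! := by rw [div_div]
    _ ≤ probAllCyclesLong d (n - ℓ) / ℓ ! := by
        gcongr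
        exact one_div_le_probAllCyclesLong hd hnℓ
    _ = n.choose (n - ℓ) * longCycleCount d (n - ℓ) / n ! := by
        have hchoose : (n.choose (n - ℓ) : ℝ) ≠ 0 := by
          exact_mod_cast (Nat.choose_pos (Nat.sub_le n ℓ)).ne'
        rw [probAllCyclesLong_eq, ← hfact]
        field_simp
    _ ≤ _ := by
        gcongr
        exact_mod_cast hcount

theorem prob_fixed_points_and_long_cycles_ge (n ℓ d : ℕ)
    (hℓ : 1 ≤ ℓ) (hℓn : ℓ < n) (hd : 1 ≤ d) (hnℓ : d < n - ℓ) :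
    1 / (10 * d * Nat.factorial ℓ : ℝ) ≤
      (Nat.card {σ : Equiv.Perm (Fin n) //
          σ.cycleType.sum = n - ℓ ∧ ∀ k ∈ σ.cycleType, d < k} : ℝ)
        / (Nat.factorial n : ℝ) :=
  prob_fixed_points_and_long_cycles_ge_general n ℓ d hd hnℓ
end
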